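/- arXiv:1908.08896 — 3 statements merged into one kernel-verified Lean document; each statement's English description precedes it below -/
import Mathlib

section
/- Let R be a commutative ring and d ≥ 1. Applying the differential operator det(∂) = Σ_{σ ∈ S_d} sgn(σ) ∂/∂x_{1,σ(1)} ⋯ ∂/∂x_{d,σ(d)} to the generic determinant det_d = det(x_{i,j}) yields the constant polynomial d!. -/
open MvPolynomial

/-- The generic d×d determinant, a form of degree `d` in the `d²` variables `x_{i,j}`. -/
noncomputable def detd (R : Type*) [CommRing R] (d : ℕ) : MvPolynomial (Fin d × Fin d) R :=
  Matrix.det (Matrix.of fun i j : Fin d => X (i, j))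

/-- The apolarity action: `diffAction θ F` is the result of applying the
constant-coefficient differential operator obtained from `θ` by substituting
`x_{i,j} ↦ ∂/∂x_{i,j}` to the polynomial `F`.  In particular
`diffAction (detd R d) F = det(∂) F = Σ_σ sgn(σ) ∂/∂x_{1,σ(1)} ⋯ ∂/∂x_{d,σ(d)} F`. -/
noncomputable def diffAction {R : Type*} [CommSemiring R] {σ : Type*}
    (θ F : MvPolynomial σ R) : MvPolynomial σ R :=
  ∑ a ∈ θ.support, ∑ b ∈ F.support,
    monomial (b - a) (θ.coeff a * F.coeff b * ∏ i ∈ a.support, ((b i).descFactorial (a i) : R))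

namespace DetDiffAux

variable {R : Type*} [CommRing R] {d : ℕ}

/-- The exponent multiset of the monomial of `det_d` corresponding to a permutation. -/
noncomputable def mm (d : ℕ) (σ : Equiv.Perm (Fin d)) : (Fin d × Fin d) →₀ ℕ :=
  ∑ i, Finsupp.single (σ i, i) 1

lemma mm_apply (σ : Equiv.Perm (Fin d)) (p : Fin d × Fin d) :
    mm d σ p = if σ p.2 = p.1 then 1 else 0 := by
  classical
  rw [mm, Finset.sum_apply']
  rw [Finset.sum_eq_single p.2]
  · simp [Finsupp.single_apply, Prod.ext_iff]
  · intro k _ hk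
    simp [Finsupp.single_apply, Prod.ext_iff, hk]
  · simp

lemma mm_injective : Function.Injective (mm d) := by
  intro σ τ h
  refine Equiv.ext fun i => ?_
  have h1 : mm d τ (σ i, i) = 1 := by rw [← h]; simp [mm_apply]
  rw [mm_apply] at h1
  by_contra hne
  rw [if_neg (fun hh => hne hh.symm)] at h1
  exact zero_ne_one h1

lemma mm_support (σ : Equiv.Perm (Fin d)) :
    (mm d σ).support = Finset.image (fun i => (σ i, i)) Finset.univ := by
  ext p
  simp only [Finsupp.mem_support_iff, mm_apply, Finset.mem_image, Finset.mem_univ, true_and]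
  constructor
  · intro h
    by_cases hp : σ p.2 = p.1
    · exact ⟨p.2, by rw [hp]⟩
    · simp [hp] at h
  · rintro ⟨i, rfl⟩
    simp

lemma prod_X_eq {ι σ' : Type*} (s : Finset ι) (f : ι → σ') :
    ∏ i ∈ s, (X (f i) : MvPolynomial σ' R)
      = monomial (∑ i ∈ s, Finsupp.single (f i) 1) (1 : R) := by
  classical
  induction s using Finset.cons_induction with
  | empty => simp
  | cons a s ha ih =>
    rw [Finset.prod_cons, Finset.sum_cons, ih, X, monomial_mul, one_mul]

lemma detd_eq :
    detd R d = ∑ σ : Equiv.Perm (Fin d),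
      monomial (mm d σ) ((Equiv.Perm.sign σ : ℤ) : R) := by
  rw [detd, Matrix.det_apply]
  refine Finset.sum_congr rfl fun σ _ => ?_
  have : ∏ i, (Matrix.of fun i j : Fin d => (X (i, j) : MvPolynomial (Fin d × Fin d) R)) (σ i) i
      = monomial (mm d σ) (1 : R) := by
    rw [mm, ← prod_X_eq]
    rfl
  rw [this, Units.smul_def, ← map_zsmul (monomial (mm d σ)), zsmul_eq_mul, mul_one]

lemma detd_coeff (σ : Equiv.Perm (Fin d)) :
    (detd R d).coeff (mm d σ) = ((Equiv.Perm.sign σ : ℤ) : R) := by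
  classical
  rw [detd_eq, coeff_sum]
  rw [Finset.sum_eq_single σ]
  · simp [coeff_monomial]
  · intro τ _ hτ
    rw [coeff_monomial, if_neg (fun h => hτ (mm_injective h))]
  · simp

lemma detd_support_subset :
    (detd R d).support ⊆ Finset.image (mm d) Finset.univ := by
  rw [detd_eq]
  refine Finset.Subset.trans support_sum ?_
  intro a ha
  simp only [Finset.mem_biUnion] at ha
  obtain ⟨σ, _, ha⟩ := ha
  have := support_monomial_subset ha
  simp only [Finset.mem_singleton] at this
  subst this
  exact Finset.mem_image_of_mem _ (Finset.mem_univ σ)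

lemma diffAction_eq_sum {σ' : Type*} (θ F : MvPolynomial σ' R) {A B : Finset (σ' →₀ ℕ)}
    (hA : θ.support ⊆ A) (hB : F.support ⊆ B) :
    diffAction θ F = ∑ a ∈ A, ∑ b ∈ B,
      monomial (b - a)
        (θ.coeff a * F.coeff b * ∏ i ∈ a.support, ((b i).descFactorial (a i) : R)) := by
  rw [diffAction]
  rw [Finset.sum_subset hA (fun a _ ha => by
    simp only [notMem_support_iff] at ha
    simp [ha])]
  refine Finset.sum_congr rfl fun a _ => ?_
  rw [Finset.sum_subset hB (fun b _ hb => by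
    simp only [notMem_support_iff] at hb
    simp [hb])]

lemma key_prod (σ τ : Equiv.Perm (Fin d)) :
    (∏ p ∈ (mm d σ).support, (((mm d τ) p).descFactorial ((mm d σ) p) : R))
      = if τ = σ then 1 else 0 := by
  classical
  rw [mm_support]
  rw [Finset.prod_image (fun i _ j _ h => (Prod.ext_iff.mp h).2)]
  have hσ : ∀ i, mm d σ (σ i, i) = 1 := fun i => by simp [mm_apply]
  by_cases h : τ = σ
  · subst h
    simp [hσ]
  · obtain ⟨i, hi⟩ : ∃ i, τ i ≠ σ i := by
      by_contra hc
      push_neg at hc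
      exact h (Equiv.ext hc)
    rw [if_neg h]
    refine Finset.prod_eq_zero (Finset.mem_univ i) ?_
    rw [hσ, mm_apply]
    simp [hi]

end DetDiffAux

/-- Applying the differential operator `det(∂)` to the generic determinant `det_d`
yields the constant `d!`. -/
theorem det_diffop_det (R : Type*) [CommRing R] (d : ℕ) (hd : 1 ≤ d) :
    diffAction (detd R d) (detd R d) = C (d.factorial : R) := by
  classical
  open DetDiffAux in
  rw [diffAction_eq_sum (detd R d) (detd R d) detd_support_subset detd_support_subset]
  rw [Finset.sum_image (fun σ _ τ _ h => mm_injective h)]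
  have : ∀ σ : Equiv.Perm (Fin d),
      (∑ b ∈ Finset.image (mm d) Finset.univ,
        monomial (b - mm d σ)
          ((detd R d).coeff (mm d σ) * (detd R d).coeff b *
            ∏ i ∈ (mm d σ).support, ((b i).descFactorial ((mm d σ) i) : R)))
      = C (1 : R) := by
    intro σ
    rw [Finset.sum_image (fun σ _ τ _ h => mm_injective h)]
    rw [Finset.sum_eq_single σ]
    · rw [key_prod, if_pos rfl, detd_coeff, ← Int.cast_mul, ← Units.val_mul, Int.units_mul_self,
        Units.val_one, Int.cast_one, one_mul, tsub_self]
      rfl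
    · intro τ _ hτ
      rw [key_prod, if_neg hτ, mul_zero, map_zero]
    · simp
  rw [Finset.sum_congr rfl fun σ _ => this σ]
  rw [Finset.sum_const, Finset.card_univ, Fintype.card_perm, Fintype.card_fin,
    nsmul_eq_mul, ← C_eq_coe_nat, ← map_mul, mul_one]
end

section
/- Let R be a commutative ring, d ≥ 1, and let ℓ = Σ_{i,j} a_{i,j} x_{i,j} be a linear form in R[x_{1,1},…,x_{d,d}] with coefficient matrix A = (a_{i,j}). Applying the differential operator det(∂) = Σ_{σ ∈ S_d} sgn(σ) ∂/∂x_{1,σ(1)} ⋯ ∂/∂x_{d,σ(d)} to ℓ^d yields the constant polynomial d!·det(A). -/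
/-!
For monomials of the same degree, `∂^a x^b = a! δ_{ab}`, so if `θ` and `F` are homogeneous of
the same degree `n` then `θ(∂) F` is the constant `∑_a a! θ_a F_a`. For `F = (∑ c_i x_i)^n` the
multinomial theorem gives `a! F_a = n! c^a`, hence `θ(∂) (∑ c_i x_i)^n = n! θ(c)`. Taking for `θ`
the generic determinant, homogeneous of degree `d`, and `c = A` gives `d! det A`.
-/

open MvPolynomial

/-- The linear form with coefficient matrix `A`, namely `ℓ = Σ_{i,j} A_{i,j} x_{i,j}`. -/
noncomputable def linFormM {R : Type*} [CommRing R] {d : ℕ}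
    (A : Matrix (Fin d) (Fin d) R) : MvPolynomial (Fin d × Fin d) R :=
  ∑ ij : Fin d × Fin d, C (A ij.1 ij.2) * X ij

open scoped Nat

namespace Finsupp

lemma eq_of_le_of_degree_eq {σ : Type*} {a b : σ →₀ ℕ} (hab : a ≤ b) (h : a.degree = b.degree) :
    a = b := by
  obtain ⟨c, rfl⟩ := le_iff_exists_add.mp hab
  rw [map_add, left_eq_add, degree_eq_zero_iff] at h
  rw [h, add_zero]

end Finsupp

namespace MvPolynomial

variable {R σ : Type*} [CommSemiring R]

lemma prod_descFactorial_eq_zero_of_degree_eq {a b : σ →₀ ℕ} (h : b.degree = a.degree)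
    (hne : b ≠ a) : ∏ i ∈ a.support, ((b i).descFactorial (a i) : R) = 0 := by
  have hlt : ∃ i ∈ a.support, b i < a i := by
    by_contra! hle
    refine hne (Finsupp.eq_of_le_of_degree_eq (fun i => ?_) h.symm).symm
    by_cases hi : i ∈ a.support
    · exact hle i hi
    · simp [Finsupp.notMem_support_iff.mp hi]
  obtain ⟨i, hi, hlt⟩ := hlt
  exact Finset.prod_eq_zero hi (by rw [Nat.descFactorial_eq_zero_iff_lt.mpr hlt, Nat.cast_zero])

lemma IsHomogeneous.degree_eq_of_mem_support {p : MvPolynomial σ R} {n : ℕ}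
    (hp : p.IsHomogeneous n) {a : σ →₀ ℕ} (ha : a ∈ p.support) : a.degree = n :=
  (hp.degree_eq_sum_deg_support ha).symm

lemma diffAction_eq_C_of_isHomogeneous {θ F : MvPolynomial σ R} {n : ℕ} (hθ : θ.IsHomogeneous n)
    (hF : F.IsHomogeneous n) :
    diffAction θ F =
      C (∑ a ∈ θ.support, θ.coeff a * F.coeff a * ∏ i ∈ a.support, ((a i)! : R)) := by
  rw [diffAction, map_sum]
  refine Finset.sum_congr rfl fun a ha => ?_
  rw [Finset.sum_eq_single a]
  · simp_rw [tsub_self, Nat.descFactorial_self, monomial_zero']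
  · intro b hb hne
    have hdeg : b.degree = a.degree := by
      rw [hF.degree_eq_of_mem_support hb, hθ.degree_eq_of_mem_support ha]
    rw [prod_descFactorial_eq_zero_of_degree_eq (R := R) hdeg hne, mul_zero, monomial_zero]
  · intro ha
    rw [notMem_support_iff.mp ha, mul_zero, zero_mul, monomial_zero]

lemma coeff_sum_smul_X_pow_mul_prod_factorial [Fintype σ] (c : σ → R) {n : ℕ} {s : σ →₀ ℕ}
    (hs : s.degree = n) :
    coeff s ((∑ i, c i • X i) ^ n) * ∏ i ∈ s.support, ((s i)! : R) =
      n ! * ∏ i ∈ s.support, c i ^ s i := by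
  have hspec : (∏ i ∈ s.support, ((s i)! : R)) * Nat.multinomial s.support s = n ! := by
    rw [← hs, Finsupp.degree_apply, ← Nat.multinomial_spec, Nat.cast_mul, Nat.cast_prod]
  rw [coeff_linearCombination_X_pow_of_fintype, if_pos (show s.sum (fun _ m => m) = n from hs),
    Finsupp.multinomial_eq, ← hspec, Finsupp.prod]
  ring

theorem diffAction_sum_smul_X_pow [Fintype σ] {θ : MvPolynomial σ R} {n : ℕ}
    (hθ : θ.IsHomogeneous n) (c : σ → R) :
    diffAction θ ((∑ i, c i • X i) ^ n) = C (n ! * eval c θ) := by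
  have hℓ : (∑ i, c i • X i : MvPolynomial σ R).IsHomogeneous 1 :=
    IsHomogeneous.sum _ _ _ fun i _ => by
      simpa only [smul_eq_C_mul] using isHomogeneous_C_mul_X (c i) i
  rw [diffAction_eq_C_of_isHomogeneous hθ (by simpa using hℓ.pow n), eval_eq, Finset.mul_sum]
  congr 1
  refine Finset.sum_congr rfl fun a ha => ?_
  rw [mul_assoc, coeff_sum_smul_X_pow_mul_prod_factorial c (hθ.degree_eq_of_mem_support ha)]
  ring

end MvPolynomial

lemma Matrix.isHomogeneous_det_mvPolynomialX (m R : Type*) [Fintype m] [DecidableEq m]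
    [CommRing R] : (Matrix.mvPolynomialX m m R).det.IsHomogeneous (Fintype.card m) := by
  rw [Matrix.det_apply]
  refine IsHomogeneous.sum _ _ _ fun σ _ => ?_
  have hprod : (∏ i, X (σ i, i) : MvPolynomial (m × m) R).IsHomogeneous (Fintype.card m) := by
    simpa using IsHomogeneous.prod Finset.univ _ (fun _ => 1) fun i _ => isHomogeneous_X R (σ i, i)
  rw [Units.smul_def, zsmul_eq_mul, ← map_intCast (C : R →+* MvPolynomial (m × m) R)]
  exact hprod.C_mul _

theorem det_diffop_pow_linear_general (R : Type*) [CommRing R] (d : ℕ)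
    (A : Matrix (Fin d) (Fin d) R) :
    diffAction (detd R d) (linFormM A ^ d) = C ((d.factorial : R) * A.det) := by
  have hℓ : linFormM A = ∑ ij : Fin d × Fin d, A ij.1 ij.2 • X ij := by
    simp_rw [linFormM, smul_eq_C_mul]
  have hdet : (detd R d).IsHomogeneous d := by
    have := Matrix.isHomogeneous_det_mvPolynomialX (Fin d) R
    rwa [Fintype.card_fin] at this
  rw [hℓ, diffAction_sum_smul_X_pow hdet, detd, ← Matrix.mvPolynomialX,
    Matrix.eval_det_mvPolynomialX]
  rfl

/-- Applying the differential operator `det(∂)` to the `d`-th power of the linear form with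
coefficient matrix `A` yields the constant `d! · det(A)`. -/
theorem det_diffop_pow_linear (R : Type*) [CommRing R] (d : ℕ) (hd : 1 ≤ d)
    (A : Matrix (Fin d) (Fin d) R) :
    diffAction (detd R d) (linFormM A ^ d) = C ((d.factorial : R) * A.det) :=
  det_diffop_pow_linear_general R d A
end

section
/- (Glynn's identity.) Over any commutative ring and for any d ≥ 1, the generic d×d permanent satisfies 2^{d−1}·per_d = Σ_{ε ∈ {±1}^d, ε₁ = 1} Π_{i=1}^d ( Σ_{j=1}^d ε_i ε_j x_{i,j} ), where the sum is over all sign vectors ε = (ε₁,…,ε_d) ∈ {+1,−1}^d with ε₁ = 1. In particular, per_d is expressed as 1/2^{d−1} times a sum of 2^{d−1} products of d linear forms (when 2 is invertible). -/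
open MvPolynomial
open Finset

section aux

variable {R : Type*} [CommRing R] {d : ℕ}

/-- abbreviation for the sign -/
private def eps (R : Type*) [CommRing R] (b : Bool) : R := if b then -1 else 1

private lemma fiber_sum (f : Fin d → Fin d) :
    ∑ j : Fin d, (univ.filter fun i => f i = j).card = d := by
  rw [← Finset.card_eq_sum_card_fiberwise (fun x _ => mem_univ (f x))]
  simp

private lemma fiber_card_of_bij {f : Fin d → Fin d} (hf : Function.Bijective f) (j : Fin d) :
    (univ.filter fun i => f i = j).card = 1 := by
  have e := Equiv.ofBijective f hf
  have : (univ.filter fun i => f i = j) = {(Equiv.ofBijective f hf).symm j} := by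
    ext i
    simp only [mem_filter, mem_univ, true_and, mem_singleton]
    constructor
    · rintro rfl
      exact ((Equiv.ofBijective f hf).symm_apply_apply i).symm
    · rintro rfl
      exact (Equiv.ofBijective f hf).apply_symm_apply j
  rw [this, card_singleton]

private lemma bij_of_fiber_card {f : Fin d → Fin d}
    (h : ∀ j, (univ.filter fun i => f i = j).card = 1) : Function.Bijective f := by
  rw [← Finite.surjective_iff_bijective]
  intro j
  have : (univ.filter fun i => f i = j).Nonempty := card_pos.mp (by rw [h j]; norm_num)
  obtain ⟨i, hi⟩ := this
  exact ⟨i, (mem_filter.mp hi).2⟩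

private lemma odd_cast_zmod2 {m : ℕ} (h : Odd m) : (m : ZMod 2) = 1 := by
  obtain ⟨k, rfl⟩ := h
  push_cast
  have : (2 : ZMod 2) = 0 := by decide
  rw [this]; ring

/-- key sign-sum computation -/
private lemma glynn_sign_sum (hd : 0 < d) (f : Fin d → Fin d) :
    (∑ s ∈ Finset.univ.filter (fun s : Fin d → Bool => s ⟨0, hd⟩ = false),
      ∏ i : Fin d, eps R (s i) * eps R (s (f i)))
    = if Function.Bijective f then (2 : R) ^ (d - 1) else 0 := by
  set z : Fin d := ⟨0, hd⟩ with hz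
  set m : Fin d → ℕ := fun j => (univ.filter fun i => f i = j).card with hm
  -- rewrite the inner product fiberwise
  have step1 : ∀ s : Fin d → Bool,
      (∏ i : Fin d, eps R (s i) * eps R (s (f i))) = ∏ j : Fin d, eps R (s j) ^ (m j + 1) := by
    intro s
    rw [Finset.prod_mul_distrib]
    have h2 : (∏ i : Fin d, eps R (s (f i))) = ∏ j : Fin d, eps R (s j) ^ (m j) := by
      rw [← Finset.prod_fiberwise_of_maps_to (fun i _ => mem_univ (f i))
        (fun i => eps R (s (f i)))]
      refine Finset.prod_congr rfl fun j _ => ?_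
      calc ∏ i ∈ univ.filter (fun i => f i = j), eps R (s (f i))
          = ∏ i ∈ univ.filter (fun i => f i = j), eps R (s j) :=
            Finset.prod_congr rfl fun i hi => by rw [(mem_filter.mp hi).2]
        _ = eps R (s j) ^ (m j) := by rw [Finset.prod_const]
    rw [h2, ← Finset.prod_mul_distrib]
    exact Finset.prod_congr rfl fun j _ => (pow_succ' _ _).symm
  -- identify the filter as a piFinset
  have step2 : (Finset.univ.filter (fun s : Fin d → Bool => s z = false))
      = Fintype.piFinset (fun j => if j = z then ({false} : Finset Bool) else univ) := by
    ext s
    simp only [mem_filter, mem_univ, true_and, Fintype.mem_piFinset]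
    constructor
    · intro h j
      by_cases hj : j = z <;> simp [hj, h]
    · intro h
      have := h z
      simpa using this
  rw [Finset.sum_congr step2 (fun s _ => step1 s),
    ← Finset.prod_univ_sum (fun j => if j = z then ({false} : Finset Bool) else univ)
      (fun j b => eps R b ^ (m j + 1))]
  by_cases hf : Function.Bijective f
  · rw [if_pos hf]
    have hall : ∀ j, m j = 1 := fun j => fiber_card_of_bij hf j
    have : ∀ j : Fin d, (∑ b ∈ (if j = z then ({false} : Finset Bool) else univ),
        eps R b ^ (m j + 1)) = if j = z then 1 else 2 := by
      intro j
      by_cases hj : j = z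
      · simp [hj, eps]
      · rw [if_neg hj, if_neg hj]
        have hb : ∀ b ∈ (univ : Finset Bool), eps R b ^ (m j + 1) = 1 := by
          intro b _
          have h2 : m j + 1 = 2 := by rw [hall j]
          cases b <;> simp [eps, h2]
        rw [Finset.sum_congr rfl hb, Finset.sum_const]
        simp
    rw [Finset.prod_congr rfl (fun j _ => this j)]
    rw [← Finset.mul_prod_erase univ _ (mem_univ z), if_pos rfl, one_mul]
    rw [Finset.prod_congr rfl (fun j hj => if_neg (Finset.ne_of_mem_erase hj)),
      Finset.prod_const, Finset.card_erase_of_mem (mem_univ z), Finset.card_univ,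
      Fintype.card_fin]
  · rw [if_neg hf]
    -- there exists j ≠ z with m j even
    have : ∃ j, j ≠ z ∧ Even (m j) := by
      by_contra hcon
      push_neg at hcon
      have hodd : ∀ j, j ≠ z → Odd (m j) := fun j hj => Nat.not_even_iff_odd.mp (hcon j hj)
      have hsum : m z + ∑ j ∈ univ.erase z, m j = d := by
        rw [Finset.add_sum_erase univ m (mem_univ z), fiber_sum]
      have h1 : ∀ j ∈ univ.erase z, 1 ≤ m j := by
        intro j hj
        exact (hodd j (Finset.ne_of_mem_erase hj)).pos
      have hcarde : (univ.erase z).card = d - 1 := by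
        rw [Finset.card_erase_of_mem (mem_univ z), Finset.card_univ, Fintype.card_fin]
      have hle : d - 1 ≤ ∑ j ∈ univ.erase z, m j := by
        calc d - 1 = ∑ _j ∈ univ.erase z, 1 := by rw [Finset.sum_const, smul_eq_mul, mul_one, hcarde]
        _ ≤ _ := Finset.sum_le_sum h1
      have hmz : m z ≤ 1 := by omega
      interval_cases h : m z
      · -- parity contradiction
        have hS : ∑ j ∈ univ.erase z, m j = d := by omega
        have hcast : ((d : ℕ) : ZMod 2) = ((d - 1 : ℕ) : ZMod 2) := by
          calc ((d : ℕ) : ZMod 2) = ((∑ j ∈ univ.erase z, m j : ℕ) : ZMod 2) := by rw [hS]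
          _ = ∑ j ∈ univ.erase z, ((m j : ℕ) : ZMod 2) := by push_cast; ring
          _ = ∑ j ∈ univ.erase z, 1 := Finset.sum_congr rfl
              (fun j hj => odd_cast_zmod2 (hodd j (Finset.ne_of_mem_erase hj)))
          _ = ((d - 1 : ℕ) : ZMod 2) := by rw [Finset.sum_const, nsmul_eq_mul, mul_one, hcarde]
        have key : ((d : ℕ) : ZMod 2) = ((d - 1 : ℕ) : ZMod 2) + 1 := by
          have hd1 : d = (d - 1) + 1 := by omega
          conv_lhs => rw [hd1]
          push_cast
          ring
        have hxx : ((d - 1 : ℕ) : ZMod 2) + 1 = ((d - 1 : ℕ) : ZMod 2) :=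
          key.symm.trans hcast
        exact absurd hxx (by simp)
      · -- all fibers have size 1 : f is bijective
        have hS : ∑ j ∈ univ.erase z, m j = d - 1 := by omega
        have : ∀ j ∈ univ.erase z, 1 = m j := by
          rw [← Finset.sum_eq_sum_iff_of_le h1]
          rw [hS, Finset.sum_const, smul_eq_mul, mul_one, hcarde]
        apply hf
        apply bij_of_fiber_card
        intro j
        by_cases hj : j = z
        · rw [hj]; exact h
        · exact (this j (Finset.mem_erase.mpr ⟨hj, mem_univ j⟩)).symm
    obtain ⟨j, hj, hje⟩ := this
    apply Finset.prod_eq_zero (mem_univ j)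
    rw [if_neg hj]
    have hodd1 : Odd (m j + 1) := Even.add_one hje
    have hb : ∀ b ∈ (univ : Finset Bool), eps R b ^ (m j + 1) = (if b then -1 else 1 : R) := by
      intro b _
      cases b
      · simp [eps]
      · simp [eps, hodd1.neg_one_pow]
    rw [Finset.sum_congr rfl hb]
    simp

end aux

/-- The generic d×d permanent, a form of degree `d` in the `d²` variables `x_{i,j}`. -/
noncomputable def perd (R : Type*) [CommRing R] (d : ℕ) : MvPolynomial (Fin d × Fin d) R :=
  ∑ σ : Equiv.Perm (Fin d), ∏ i : Fin d, X (i, σ i)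

/-- Glynn's identity: `2^{d-1} per_d = Σ_{ε ∈ {±1}^d, ε₁ = 1} Π_i Σ_j ε_i ε_j x_{i,j}` over
any commutative ring.  Sign vectors `ε` with `ε₁ = 1` are encoded as functions
`s : Fin d → Bool` with `s 0 = false`, with `ε_i = -1` iff `s i = true`. -/
theorem glynn_identity (R : Type*) [CommRing R] (d : ℕ) (hd : 0 < d) :
    (2 : MvPolynomial (Fin d × Fin d) R) ^ (d - 1) * perd R d =
      ∑ s ∈ Finset.univ.filter (fun s : Fin d → Bool => s ⟨0, hd⟩ = false),
        ∏ i : Fin d, ∑ j : Fin d,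
          C ((if s i then (-1 : R) else 1) * (if s j then (-1 : R) else 1)) * X (i, j) := by
  have expand : ∀ s : Fin d → Bool,
      (∏ i : Fin d, ∑ j : Fin d,
        C ((if s i then (-1 : R) else 1) * (if s j then (-1 : R) else 1)) * X (i, j))
      = ∑ f : Fin d → Fin d,
          C (∏ i : Fin d, eps R (s i) * eps R (s (f i))) * ∏ i : Fin d, X (i, f i) := by
    intro s
    rw [show (∏ i : Fin d, ∑ j : Fin d,
        C ((if s i then (-1 : R) else 1) * (if s j then (-1 : R) else 1)) * X (i, j))
      = ∏ i : Fin d, ∑ j ∈ (univ : Finset (Fin d)),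
        C (eps R (s i) * eps R (s j)) * X (i, j) from rfl]
    rw [Finset.prod_univ_sum (fun _ => (univ : Finset (Fin d)))
      (fun i j => C (eps R (s i) * eps R (s j)) * X (i, j)), Fintype.piFinset_univ]
    refine Finset.sum_congr rfl fun f _ => ?_
    rw [Finset.prod_mul_distrib, map_prod]
  rw [Finset.sum_congr rfl (fun s _ => expand s), Finset.sum_comm]
  have : ∀ f : Fin d → Fin d,
      (∑ s ∈ Finset.univ.filter (fun s : Fin d → Bool => s ⟨0, hd⟩ = false),
        C (∏ i : Fin d, eps R (s i) * eps R (s (f i))) * ∏ i : Fin d, X (i, f i))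
      = C (if Function.Bijective f then (2 : R) ^ (d - 1) else 0) * ∏ i : Fin d, X (i, f i) := by
    intro f
    rw [← Finset.sum_mul, ← map_sum, glynn_sign_sum hd f]
  rw [Finset.sum_congr rfl (fun f _ => this f)]
  have split : (∑ f : Fin d → Fin d,
      C (if Function.Bijective f then (2 : R) ^ (d - 1) else 0) * ∏ i : Fin d, X (i, f i))
      = ∑ f ∈ univ.filter (fun f : Fin d → Fin d => Function.Bijective f),
          C ((2 : R) ^ (d - 1)) * ∏ i : Fin d, X (i, f i) := by
    rw [Finset.sum_filter]
    refine Finset.sum_congr rfl fun f _ => ?_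
    split_ifs with h
    · rfl
    · rw [map_zero, zero_mul]
  rw [split]
  have perm : (∑ f ∈ univ.filter (fun f : Fin d → Fin d => Function.Bijective f),
      C ((2 : R) ^ (d - 1)) * ∏ i : Fin d, X (i, f i))
      = ∑ σ : Equiv.Perm (Fin d), C ((2 : R) ^ (d - 1)) * ∏ i : Fin d, X (i, σ i) := by
    refine (Finset.sum_bij (fun (σ : Equiv.Perm (Fin d)) _ => (σ : Fin d → Fin d)) ?_ ?_ ?_ ?_).symm
    · intro σ _
      exact Finset.mem_filter.mpr ⟨mem_univ _, σ.bijective⟩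
    · intro σ₁ _ σ₂ _ h
      exact Equiv.coe_fn_injective h
    · intro f hf
      exact ⟨Equiv.ofBijective f (mem_filter.mp hf).2, mem_univ _, rfl⟩
    · intro σ _
      rfl
  rw [perm, ← Finset.mul_sum]
  rw [show perd R d = ∑ σ : Equiv.Perm (Fin d), ∏ i : Fin d, X (i, σ i) from rfl]
  congr 1
  rw [map_pow, map_ofNat]
end
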